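/- arXiv:2311.04123 — 3 statements merged into one kernel-verified Lean document; each statement's English description precedes it below -/
import Mathlib

section
/- Let p_r, p_v : ℝ → ℝ³ and p_m : ℝ → ℝ satisfy the costate equations ṗ_v = −p_r on an interval I. If p_v(t) = 0 for all t in I and the nontriviality condition (p_r(t), p_v(t), p_m(t)) ≠ 0 holds on I, and if the switching function S = (T_max/m)‖p_v‖ − (T_max/(I_sp g₀)) p_m vanishes on I (with T_max, m, I_sp, g₀ > 0), then we reach a contradiction; hence if S ≡ 0 on I and nontriviality holds, then p_v ≠ 0 on I. -/
open Real Set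

theorem stmt_5 (pr pv : ℝ → EuclideanSpace ℝ (Fin 3)) (pm : ℝ → ℝ)
    (a b : ℝ) (hab : a < b)
    (Tmax m Isp g0 : ℝ) (hT : 0 < Tmax) (hm : 0 < m) (hIsp : 0 < Isp) (hg : 0 < g0)
    (hcostate : ∀ t ∈ Ioo a b, HasDerivAt pv (-(pr t)) t)
    (hpv : ∀ t ∈ Ioo a b, pv t = 0)
    (hnontriv : ∀ t ∈ Ioo a b, ¬(pr t = 0 ∧ pv t = 0 ∧ pm t = 0))
    (hS : ∀ t ∈ Ioo a b, (Tmax / m) * ‖pv t‖ - (Tmax / (Isp * g0)) * pm t = 0) :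
    False := by
  set t := (a + b) / 2 with ht
  have htI : t ∈ Ioo a b := ⟨by linarith, by linarith⟩
  have hpvt : pv t = 0 := hpv t htI
  -- pm t = 0 from S = 0
  have hSm : pm t = 0 := by
    have := hS t htI
    rw [hpvt] at this
    simp at this
    have hne : Tmax / (Isp * g0) ≠ 0 := by positivity
    rcases this with h | h
    · exact absurd h (by push_neg; exact ⟨ne_of_gt hT, ne_of_gt hIsp, ne_of_gt hg⟩)
    · exact h
  -- pr t = 0 from derivative uniqueness
  have heq : pv =ᶠ[nhds t] (fun _ => (0 : EuclideanSpace ℝ (Fin 3))) := by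
    filter_upwards [Ioo_mem_nhds htI.1 htI.2] with s hs using hpv s hs
  have h0 : HasDerivAt pv (0 : EuclideanSpace ℝ (Fin 3)) t := by
    have : HasDerivAt (fun _ : ℝ => (0 : EuclideanSpace ℝ (Fin 3))) 0 t := hasDerivAt_const _ _
    exact this.congr_of_eventuallyEq heq
  have hprt : pr t = 0 := by
    have := (hcostate t htI).unique h0
    simpa [neg_eq_zero] using this
  exact hnontriv t htI ⟨hprt, hpvt, hSm⟩
end

section
/- Suppose on an interval I the functions m, p_m, p_v satisfy ṁ = −(T_max/(I_sp g₀))c, ṗ_m = c T_max ‖p_v‖/m², ṗ_v = −p_r, with m > 0, ‖p_v‖ > 0, and the switching function S = ‖p_v‖/m − p_m/(I_sp g₀) vanishes identically on I. Then p_v(t) · p_r(t) = 0 for all t in I. -/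
open Real Set

/-!
On a singular arc `S = 0` forces `‖p_v‖ = m · (p_m / (I_sp g₀))`. Along the dynamics the product
`m · p_m / (I_sp g₀)` has derivative `(c T_max / (I_sp g₀)) · S`, which vanishes, so `‖p_v‖²` is
constant on the arc; its derivative is `2 ⟪p_v, ṗ_v⟫ = -2 ⟪p_v, p_r⟫`. Working with the square
avoids differentiating the norm at `p_v = 0`.
-/

theorem hasDerivAt_mass_mul_costate {m pm : ℝ → ℝ} {t c T K ν : ℝ}
    (hm : HasDerivAt m (-(T / K) * c) t) (hpm : HasDerivAt pm (c * T * ν / m t ^ 2) t)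
    (hmt : m t ≠ 0) :
    HasDerivAt (fun s => m s * (pm s / K)) (c * T / K * (ν / m t - pm t / K)) t := by
  refine (hm.fun_mul (hpm.div_const K)).congr_deriv ?_
  have hcancel : m t * (c * T * ν / m t ^ 2 / K) = c * T * ν / m t / K := by field_simp
  rw [hcancel]
  ring

theorem stmt_6_general (pr pv : ℝ → EuclideanSpace ℝ (Fin 3)) (pm m c : ℝ → ℝ)
    (a b : ℝ)
    (Tmax Isp g0 : ℝ)
    (hmdot : ∀ t ∈ Ioo a b, HasDerivAt m (-(Tmax / (Isp * g0)) * c t) t)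
    (hpmdot : ∀ t ∈ Ioo a b, HasDerivAt pm (c t * Tmax * ‖pv t‖ / (m t) ^ 2) t)
    (hpvdot : ∀ t ∈ Ioo a b, HasDerivAt pv (-(pr t)) t)
    (hm : ∀ t ∈ Ioo a b, 0 < m t)
    (hS : ∀ t ∈ Ioo a b, ‖pv t‖ / m t - pm t / (Isp * g0) = 0) :
    ∀ t ∈ Ioo a b, inner ℝ (pv t) (pr t) = (0 : ℝ) := by
  intro t ht
  have hnorm_eq : (fun s => ‖pv s‖ ^ 2) =ᶠ[nhds t] fun s => (m s * (pm s / (Isp * g0))) ^ 2 := by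
    filter_upwards [Ioo_mem_nhds ht.1 ht.2] with s hs
    rw [(div_eq_iff (hm s hs).ne').1 (sub_eq_zero.1 (hS s hs)), mul_comm]
  have hprod := (hasDerivAt_mass_mul_costate (hmdot t ht) (hpmdot t ht) (hm t ht).ne').pow 2
  rw [hS t ht, mul_zero, mul_zero] at hprod
  have hinner : 2 * inner ℝ (pv t) (-(pr t)) = (0 : ℝ) :=
    (hpvdot t ht).norm_sq.unique (hprod.congr_of_eventuallyEq hnorm_eq)
  rw [inner_neg_right] at hinner
  linarith

theorem stmt_6 (pr pv : ℝ → EuclideanSpace ℝ (Fin 3)) (pm m c : ℝ → ℝ)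
    (a b : ℝ) (hab : a < b)
    (Tmax Isp g0 : ℝ) (hT : 0 < Tmax) (hIsp : 0 < Isp) (hg : 0 < g0)
    (hmdot : ∀ t ∈ Ioo a b, HasDerivAt m (-(Tmax / (Isp * g0)) * c t) t)
    (hpmdot : ∀ t ∈ Ioo a b, HasDerivAt pm (c t * Tmax * ‖pv t‖ / (m t) ^ 2) t)
    (hpvdot : ∀ t ∈ Ioo a b, HasDerivAt pv (-(pr t)) t)
    (hm : ∀ t ∈ Ioo a b, 0 < m t)
    (hpv : ∀ t ∈ Ioo a b, 0 < ‖pv t‖)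
    (hS : ∀ t ∈ Ioo a b, ‖pv t‖ / m t - pm t / (Isp * g0) = 0) :
    ∀ t ∈ Ioo a b, inner ℝ (pv t) (pr t) = (0 : ℝ) :=
  stmt_6_general pr pv pm m c a b Tmax Isp g0 hmdot hpmdot hpvdot hm hS
end

section
/- Fix e ∈ [0,1) and θ with 1 + e cos θ > 0, let β₀ = arccos(1/√3), and define Ψ₂(β) = −2 cos β sin β − (1 − 3cos²β)·Γ on [β₀, π − β₀], where Γ = e sin θ/(1 + e cos θ). Then Ψ₂ has exactly one zero in (β₀, π − β₀). -/
/-! Writing `D β = 1 - 3 cos² β`, which is positive exactly on `(β₀, π - β₀)` and vanishes at the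
endpoints, a zero of `Ψ₂` in the open interval is a solution of `-2 cos β sin β / D β = Γ`. The
left-hand side has derivative `(2 + 2 cos² β) / D β² > 0`, so it is strictly increasing and there
is at most one zero. At the endpoints `D` vanishes, so `Ψ₂` takes the values `∓ 2 cos β₀ sin β₀`
there, and the intermediate value theorem gives a zero. -/

open Real Set

local notation "β₀" => arccos (1 / √3)

lemma inv_sqrt_three_sq : (1 / √3 : ℝ) ^ 2 = 1 / 3 := by
  rw [div_pow, one_pow, sq_sqrt (by norm_num)]

lemma inv_sqrt_three_mem_Ioo : (1 / √3 : ℝ) ∈ Ioo 0 1 := by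
  have h : (1 : ℝ) < √3 := by
    rw [show (1 : ℝ) = √1 by simp]
    exact sqrt_lt_sqrt (by norm_num) (by norm_num)
  exact ⟨by positivity, (div_lt_one (by positivity)).2 h⟩

lemma cos_arccos_inv_sqrt_three : cos β₀ = 1 / √3 :=
  cos_arccos (by linarith [inv_sqrt_three_mem_Ioo.1]) inv_sqrt_three_mem_Ioo.2.le

lemma arccos_inv_sqrt_three_mem_Ioo : β₀ ∈ Ioo 0 (π / 2) :=
  ⟨arccos_pos.2 inv_sqrt_three_mem_Ioo.2, arccos_lt_pi_div_two.2 inv_sqrt_three_mem_Ioo.1⟩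

lemma sin_arccos_inv_sqrt_three_pos : 0 < sin β₀ :=
  sin_pos_of_pos_of_lt_pi arccos_inv_sqrt_three_mem_Ioo.1
    (by linarith [arccos_inv_sqrt_three_mem_Ioo.2, pi_pos])

lemma one_sub_three_mul_cos_sq_pos {β : ℝ} (hβ : β ∈ Ioo β₀ (π - β₀)) :
    0 < 1 - 3 * cos β ^ 2 := by
  obtain ⟨hβ₀, hβ₀'⟩ := arccos_inv_sqrt_three_mem_Ioo
  have hlt : cos β < 1 / √3 := by
    rw [← cos_arccos_inv_sqrt_three]
    exact cos_lt_cos_of_nonneg_of_le_pi hβ₀.le (by linarith [hβ.2]) hβ.1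
  have hgt : -(1 / √3) < cos β := by
    rw [← cos_arccos_inv_sqrt_three, ← cos_pi_sub]
    exact cos_lt_cos_of_nonneg_of_le_pi (by linarith [hβ.1]) (by linarith) hβ.2
  have hsq : cos β ^ 2 < (1 / √3) ^ 2 := sq_lt_sq' hgt hlt
  rw [inv_sqrt_three_sq] at hsq
  linarith

lemma hasDerivAt_sin_cos_div_one_sub_three_mul_cos_sq {x : ℝ} (hx : 1 - 3 * cos x ^ 2 ≠ 0) :
    HasDerivAt (fun β ↦ -2 * cos β * sin β / (1 - 3 * cos β ^ 2))
      ((2 + 2 * cos x ^ 2) / (1 - 3 * cos x ^ 2) ^ 2) x := by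
  have hnum : HasDerivAt (fun β ↦ -2 * cos β * sin β) (2 * sin x ^ 2 - 2 * cos x ^ 2) x :=
    (((hasDerivAt_cos x).const_mul (-2)).mul (hasDerivAt_sin x)).congr_deriv (by ring)
  have hden : HasDerivAt (fun β ↦ 1 - 3 * cos β ^ 2) (6 * cos x * sin x) x :=
    (((hasDerivAt_cos x).pow 2).const_mul 3).const_sub 1 |>.congr_deriv (by ring)
  refine (hnum.div hden hx).congr_deriv ?_
  congr 1
  linear_combination (2 + 6 * cos x ^ 2) * sin_sq_add_cos_sq x

lemma strictMonoOn_sin_cos_div_one_sub_three_mul_cos_sq {s : Set ℝ} (hs : Convex ℝ s)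
    (hpos : ∀ β ∈ s, 0 < 1 - 3 * cos β ^ 2) :
    StrictMonoOn (fun β ↦ -2 * cos β * sin β / (1 - 3 * cos β ^ 2)) s := by
  refine strictMonoOn_of_deriv_pos hs ?_ fun x hx ↦ ?_
  · exact fun x hx ↦ (hasDerivAt_sin_cos_div_one_sub_three_mul_cos_sq
      (hpos x hx).ne').continuousAt.continuousWithinAt
  · have hx := hpos x (interior_subset hx)
    rw [(hasDerivAt_sin_cos_div_one_sub_three_mul_cos_sq hx.ne').deriv]
    positivity

theorem existsUnique_sin_cos_sub_one_sub_three_mul_cos_sq_eq_zero (Γ : ℝ) :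
    ∃! β : ℝ, β ∈ Ioo β₀ (π - β₀) ∧ -2 * cos β * sin β - (1 - 3 * cos β ^ 2) * Γ = 0 := by
  set Ψ : ℝ → ℝ := fun β ↦ -2 * cos β * sin β - (1 - 3 * cos β ^ 2) * Γ with hΨ
  have hcos_sq : cos β₀ ^ 2 = 1 / 3 := by rw [cos_arccos_inv_sqrt_three, inv_sqrt_three_sq]
  have hcos_pos : 0 < cos β₀ := by rw [cos_arccos_inv_sqrt_three]; exact inv_sqrt_three_mem_Ioo.1
  have hleft : Ψ β₀ = -2 * cos β₀ * sin β₀ := by simp only [hΨ, hcos_sq]; ring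
  have hright : Ψ (π - β₀) = 2 * cos β₀ * sin β₀ := by
    simp only [hΨ, cos_pi_sub, sin_pi_sub, neg_sq, hcos_sq]; ring
  have hprod := mul_pos hcos_pos sin_arccos_inv_sqrt_three_pos
  obtain ⟨c, hc, hΨc⟩ := intermediate_value_Ioo
    (by linarith [arccos_inv_sqrt_three_mem_Ioo.2] : β₀ ≤ π - β₀)
    (by fun_prop : Continuous Ψ).continuousOn
    (⟨by linarith, by linarith⟩ : (0 : ℝ) ∈ Ioo (Ψ β₀) (Ψ (π - β₀)))
  have hquot : ∀ β ∈ Ioo β₀ (π - β₀), Ψ β = 0 →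
      -2 * cos β * sin β / (1 - 3 * cos β ^ 2) = Γ := fun β hβ hΨβ ↦ by
    rw [div_eq_iff (one_sub_three_mul_cos_sq_pos hβ).ne']
    linear_combination hΨβ
  refine ⟨c, ⟨hc, hΨc⟩, fun β ⟨hβ, hΨβ⟩ ↦ ?_⟩
  exact (strictMonoOn_sin_cos_div_one_sub_three_mul_cos_sq (convex_Ioo _ _)
    fun _ ↦ one_sub_three_mul_cos_sq_pos).injOn hβ hc
    (by rw [hquot β hβ hΨβ, hquot c hc hΨc])

theorem stmt_11_general (e θ : ℝ) :
    ∃! β : ℝ, β ∈ Ioo (arccos (1 / Real.sqrt 3)) (π - arccos (1 / Real.sqrt 3)) ∧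
      -2 * cos β * sin β
        - (1 - 3 * (cos β) ^ 2) * (e * sin θ / (1 + e * cos θ)) = 0 :=
  existsUnique_sin_cos_sub_one_sub_three_mul_cos_sq_eq_zero _

theorem stmt_11 (e θ : ℝ) (he : e ∈ Ico (0 : ℝ) 1) (hden : 0 < 1 + e * cos θ) :
    ∃! β : ℝ, β ∈ Ioo (arccos (1 / Real.sqrt 3)) (π - arccos (1 / Real.sqrt 3)) ∧
      -2 * cos β * sin β
        - (1 - 3 * (cos β) ^ 2) * (e * sin θ / (1 + e * cos θ)) = 0 :=
  stmt_11_general e θ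
end
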